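/- Fix M ≥ 0. There exists a constant C > 0, depending only on M, such that for all nonzero ξ, η ∈ ℝ², the 2×2 matrix products satisfy ‖Π^M_+(ξ)·Π^M_−(η)‖ ≤ C·(∠(ξ, η) + ⟨ξ⟩^{-1} + ⟨η⟩^{-1}) and ‖Π^M_−(ξ)·Π^M_+(η)‖ ≤ C·(∠(ξ, η) + ⟨ξ⟩^{-1} + ⟨η⟩^{-1}), where ‖·‖ denotes the operator norm on ℂ² and ⟨ξ⟩ = √(1 + |ξ|²). -/

import Mathlib

noncomputable section

/-- ℝ² as a Euclidean space. -/
abbrev E2 := EuclideanSpace ℝ (Fin 2)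

/-- The Japanese bracket `⟨ξ⟩_M = √(M² + |ξ|²)`. -/
def jb (M : ℝ) (ξ : E2) : ℝ := Real.sqrt (M ^ 2 + ‖ξ‖ ^ 2)

/-- The Pauli matrix σ¹. -/
def σ1 : Matrix (Fin 2) (Fin 2) ℂ := !![0, 1; 1, 0]

/-- The Pauli matrix σ². -/
def σ2 : Matrix (Fin 2) (Fin 2) ℂ := !![0, -Complex.I; Complex.I, 0]

/-- The Dirac matrix γ⁰. -/
def γ0 : Matrix (Fin 2) (Fin 2) ℂ := !![1, 0; 0, -1]

/-- The projection `Π^M_s(ξ) = (1/2)[I + s·⟨ξ⟩_M⁻¹(ξ₁σ¹ + ξ₂σ² + Mγ⁰)]`, `s = ±1`. -/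
def PiM (M s : ℝ) (ξ : E2) : Matrix (Fin 2) (Fin 2) ℂ :=
  (2 : ℂ)⁻¹ • (1 + ((s / jb M ξ : ℝ) : ℂ) •
    (((ξ 0 : ℝ) : ℂ) • σ1 + ((ξ 1 : ℝ) : ℂ) • σ2 + ((M : ℝ) : ℂ) • γ0))

/-- The operator norm on ℂ² of a 2×2 complex matrix. -/
def opNorm (A : Matrix (Fin 2) (Fin 2) ℂ) : ℝ := ‖Matrix.toEuclideanCLM (𝕜 := ℂ) A‖

/-!
Write `Π^M_±(ξ) = (1 ± D(ξ))/2`, where `D(ξ)` is the Dirac matrix `a₁σ¹ + a₂σ² + rγ⁰` of the unit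
vector `(a, r) = (ξ, M)/⟨ξ⟩_M`. Such a matrix is Hermitian with square `(|a|² + r²)·I`, so its
operator norm is `|(a, r)|` and `D(ξ)² = I`. Hence `Π₊(ξ)Π₋(ξ) = 0`, and
`Π₊(ξ)Π₋(η) = Π₊(ξ)(D(ξ) - D(η))/2` has norm at most `|(ξ, M)/⟨ξ⟩_M - (η, M)/⟨η⟩_M|`.
Comparing `ξ/⟨ξ⟩_M` with `ξ/|ξ|` costs `|M|/⟨ξ⟩_M ≲ ⟨ξ⟩⁻¹`, and the chord between
`ξ/|ξ|` and `η/|η|` is at most the angle `∠(ξ, η)`.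
-/

open InnerProductGeometry
open scoped Matrix.Norms.L2Operator

section Chord

variable {V : Type*} [NormedAddCommGroup V] [InnerProductSpace ℝ V]

lemma norm_sub_le_angle_of_norm_eq_one {x y : V} (hx : ‖x‖ = 1) (hy : ‖y‖ = 1) :
    ‖x - y‖ ≤ angle x y := by
  have hsq : ‖x - y‖ ^ 2 = 2 - 2 * Real.cos (angle x y) := by
    rw [norm_sub_sq_real, ← cos_angle_mul_norm_mul_norm, hx, hy]; ring
  have hcos := Real.one_sub_sq_div_two_le_cos (x := angle x y)
  exact (pow_le_pow_iff_left₀ (norm_nonneg _) (angle_nonneg x y) two_ne_zero).1 (by linarith)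

lemma norm_normalize_sub_normalize_le_angle {x y : V} (hx : x ≠ 0) (hy : y ≠ 0) :
    ‖NormedSpace.normalize x - NormedSpace.normalize y‖ ≤ angle x y := by
  simpa [angle_normalize_left, angle_normalize_right] using
    norm_sub_le_angle_of_norm_eq_one (NormedSpace.norm_normalize_eq_one_iff.2 hx)
      (NormedSpace.norm_normalize_eq_one_iff.2 hy)

end Chord

lemma one_add_mul_one_sub_of_mul_self_eq_one {R : Type*} [Ring R] {d : R} (hd : d * d = 1)
    (d' : R) : (1 + d) * (1 - d') = (1 + d) * (d - d') := by
  have hker : (1 + d) * (1 - d) = 0 := by noncomm_ring; rw [hd]; abel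
  calc (1 + d) * (1 - d') = (1 + d) * (1 - d) + (1 + d) * (d - d') := by noncomm_ring
    _ = (1 + d) * (d - d') := by rw [hker, zero_add]

lemma norm_smul_one_add_mul_smul_one_sub_le {A : Type*} [NormedRing A] [NormedAlgebra ℂ A]
    [NormOneClass A] {d : A} (hd : d * d = 1) (hd1 : ‖d‖ ≤ 1) (d' : A) :
    ‖((2 : ℂ)⁻¹ • (1 + d)) * ((2 : ℂ)⁻¹ • (1 - d'))‖ ≤ 2⁻¹ * ‖d - d'‖ := by
  have h2 : ‖1 + d‖ ≤ 2 := (norm_add_le _ _).trans (by rw [norm_one]; linarith)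
  rw [smul_mul_smul_comm, one_add_mul_one_sub_of_mul_self_eq_one hd, norm_smul]
  calc ‖(2 : ℂ)⁻¹ * 2⁻¹‖ * ‖(1 + d) * (d - d')‖ ≤ 4⁻¹ * (2 * ‖d - d'‖) := by
        gcongr
        · norm_num
        · exact (norm_mul_le _ _).trans (by gcongr)
    _ = 2⁻¹ * ‖d - d'‖ := by ring

def diracSymbol (a : E2) (r : ℝ) : Matrix (Fin 2) (Fin 2) ℂ :=
  ((a 0 : ℝ) : ℂ) • σ1 + ((a 1 : ℝ) : ℂ) • σ2 + ((r : ℝ) : ℂ) • γ0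

lemma diracSymbol_sub (a b : E2) (r s : ℝ) :
    diracSymbol a r - diracSymbol b s = diracSymbol (a - b) (r - s) := by
  simp only [diracSymbol, PiLp.sub_apply, Complex.ofReal_sub, sub_smul]
  abel

lemma isSelfAdjoint_diracSymbol (a : E2) (r : ℝ) : IsSelfAdjoint (diracSymbol a r) := by
  ext i j
  fin_cases i <;> fin_cases j <;> simp [diracSymbol, σ1, σ2, γ0, Matrix.star_apply]

lemma diracSymbol_mul_self (a : E2) (r : ℝ) :
    diracSymbol a r * diracSymbol a r = ((‖a‖ ^ 2 + r ^ 2 : ℝ) : ℂ) • 1 := by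
  rw [EuclideanSpace.norm_sq_eq, Fin.sum_univ_two]
  ext i j
  fin_cases i <;> fin_cases j <;>
    simp [diracSymbol, σ1, σ2, γ0, Matrix.mul_apply, Fin.sum_univ_two] <;> ring_nf <;> simp

lemma norm_diracSymbol (a : E2) (r : ℝ) : ‖diracSymbol a r‖ = √(‖a‖ ^ 2 + r ^ 2) := by
  rw [← Real.sqrt_sq (norm_nonneg _), ← (isSelfAdjoint_diracSymbol a r).norm_mul_self,
    diracSymbol_mul_self, norm_smul, norm_one, mul_one, Complex.norm_real, Real.norm_eq_abs,
    abs_of_nonneg (by positivity)]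

lemma norm_diracSymbol_le (a : E2) (r : ℝ) : ‖diracSymbol a r‖ ≤ ‖a‖ + |r| := by
  rw [norm_diracSymbol, Real.sqrt_le_left (by positivity), ← sq_abs r]
  nlinarith [norm_nonneg a, abs_nonneg r]

lemma jb_nonneg (M : ℝ) (ξ : E2) : 0 ≤ jb M ξ := Real.sqrt_nonneg _

lemma jb_pos (M : ℝ) {ξ : E2} (hξ : ξ ≠ 0) : 0 < jb M ξ :=
  Real.sqrt_pos.2 (by have := norm_pos_iff.2 hξ; positivity)

lemma norm_le_jb (M : ℝ) (ξ : E2) : ‖ξ‖ ≤ jb M ξ :=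
  Real.le_sqrt_of_sq_le (by nlinarith [sq_nonneg M])

lemma abs_le_jb (M : ℝ) (ξ : E2) : |M| ≤ jb M ξ :=
  Real.abs_le_sqrt (by nlinarith [sq_nonneg ‖ξ‖])

lemma jb_le_abs_add_norm (M : ℝ) (ξ : E2) : jb M ξ ≤ |M| + ‖ξ‖ := by
  rw [jb, Real.sqrt_le_left (by positivity), ← sq_abs M]
  nlinarith [norm_nonneg ξ, abs_nonneg M]

lemma jb_one_pos (ξ : E2) : 0 < jb 1 ξ :=
  Real.sqrt_pos.2 (by positivity)

lemma abs_div_jb_le (M : ℝ) (ξ : E2) : |M| / jb M ξ ≤ (|M| + 1) * (jb 1 ξ)⁻¹ := by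
  rw [← div_eq_mul_inv]
  rcases (jb_nonneg M ξ).eq_or_lt with h0 | hpos
  · rw [← h0, div_zero]
    exact div_nonneg (by positivity) (jb_one_pos ξ).le
  rw [div_le_div_iff₀ hpos (jb_one_pos ξ)]
  have h1 : jb 1 ξ ≤ 1 + ‖ξ‖ := by simpa using jb_le_abs_add_norm 1 ξ
  nlinarith [norm_le_jb M ξ, abs_le_jb M ξ, abs_nonneg M]

def unitDiracSymbol (M : ℝ) (ξ : E2) : Matrix (Fin 2) (Fin 2) ℂ :=
  diracSymbol ((jb M ξ)⁻¹ • ξ) (M / jb M ξ)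

lemma PiM_eq (M s : ℝ) (ξ : E2) :
    PiM M s ξ = (2 : ℂ)⁻¹ • (1 + (s : ℂ) • unitDiracSymbol M ξ) := by
  simp only [PiM, unitDiracSymbol, diracSymbol, smul_add, smul_smul, PiLp.smul_apply,
    smul_eq_mul]
  push_cast
  ring_nf

lemma PiM_one (M : ℝ) (ξ : E2) : PiM M 1 ξ = (2 : ℂ)⁻¹ • (1 + unitDiracSymbol M ξ) := by
  simp [PiM_eq]

lemma PiM_neg_one (M : ℝ) (ξ : E2) :
    PiM M (-1) ξ = (2 : ℂ)⁻¹ • (1 - unitDiracSymbol M ξ) := by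
  simp [PiM_eq, sub_eq_add_neg]

lemma norm_inv_jb_smul_sq_add_div_jb_sq (M : ℝ) {ξ : E2} (hξ : ξ ≠ 0) :
    ‖(jb M ξ)⁻¹ • ξ‖ ^ 2 + (M / jb M ξ) ^ 2 = 1 := by
  have hpos := jb_pos M hξ
  rw [norm_smul, Real.norm_of_nonneg (inv_nonneg.2 hpos.le), mul_pow, div_pow, inv_pow,
    ← div_eq_inv_mul, ← add_div, div_eq_one_iff_eq (by positivity), jb,
    Real.sq_sqrt (by positivity), add_comm]

lemma unitDiracSymbol_mul_self (M : ℝ) {ξ : E2} (hξ : ξ ≠ 0) :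
    unitDiracSymbol M ξ * unitDiracSymbol M ξ = 1 := by
  rw [unitDiracSymbol, diracSymbol_mul_self, norm_inv_jb_smul_sq_add_div_jb_sq M hξ,
    Complex.ofReal_one, one_smul]

lemma norm_unitDiracSymbol (M : ℝ) {ξ : E2} (hξ : ξ ≠ 0) : ‖unitDiracSymbol M ξ‖ = 1 := by
  rw [unitDiracSymbol, norm_diracSymbol, norm_inv_jb_smul_sq_add_div_jb_sq M hξ, Real.sqrt_one]

lemma norm_inv_jb_smul_sub_normalize_le (M : ℝ) {ξ : E2} (hξ : ξ ≠ 0) :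
    ‖(jb M ξ)⁻¹ • ξ - NormedSpace.normalize ξ‖ ≤ |M| / jb M ξ := by
  have hpos := jb_pos M hξ
  have hn := norm_pos_iff.2 hξ
  calc ‖(jb M ξ)⁻¹ • ξ - NormedSpace.normalize ξ‖ = (jb M ξ - ‖ξ‖) / jb M ξ := by
        rw [NormedSpace.normalize, ← sub_smul, norm_smul, Real.norm_eq_abs, abs_sub_comm,
          abs_of_nonneg (sub_nonneg.2 (inv_anti₀ hn (norm_le_jb M ξ)))]
        field_simp
    _ ≤ |M| / jb M ξ := by
        gcongr
        linarith [jb_le_abs_add_norm M ξ]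

lemma norm_unitDiracSymbol_sub_le (M : ℝ) {ξ η : E2} (hξ : ξ ≠ 0) (hη : η ≠ 0) :
    ‖unitDiracSymbol M ξ - unitDiracSymbol M η‖ ≤
      angle ξ η + 2 * (|M| / jb M ξ + |M| / jb M η) := by
  have hvec : ‖(jb M ξ)⁻¹ • ξ - (jb M η)⁻¹ • η‖ ≤ |M| / jb M ξ + angle ξ η + |M| / jb M η :=
    calc _ ≤ ‖(jb M ξ)⁻¹ • ξ - NormedSpace.normalize ξ‖
          + ‖NormedSpace.normalize ξ - NormedSpace.normalize η‖
          + ‖NormedSpace.normalize η - (jb M η)⁻¹ • η‖ :=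
          (norm_sub_le_norm_sub_add_norm_sub _ (NormedSpace.normalize η) _).trans
            (by gcongr; exact norm_sub_le_norm_sub_add_norm_sub _ _ _)
      _ ≤ _ := by
        rw [norm_sub_rev (NormedSpace.normalize η)]
        gcongr
        exacts [norm_inv_jb_smul_sub_normalize_le M hξ,
          norm_normalize_sub_normalize_le_angle hξ hη, norm_inv_jb_smul_sub_normalize_le M hη]
  have hscal : |M / jb M ξ - M / jb M η| ≤ |M| / jb M ξ + |M| / jb M η := by
    simpa [abs_div, abs_of_pos (jb_pos M hξ), abs_of_pos (jb_pos M hη)] using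
      abs_sub (M / jb M ξ) (M / jb M η)
  rw [unitDiracSymbol, unitDiracSymbol, diracSymbol_sub]
  linarith [norm_diracSymbol_le ((jb M ξ)⁻¹ • ξ - (jb M η)⁻¹ • η) (M / jb M ξ - M / jb M η)]

theorem stmt4_general (M : ℝ) :
    ∃ C : ℝ, 0 < C ∧ ∀ (ξ η : E2), ξ ≠ 0 → η ≠ 0 →
      opNorm (PiM M 1 ξ * PiM M (-1) η) ≤
        C * (InnerProductGeometry.angle ξ η + (jb 1 ξ)⁻¹ + (jb 1 η)⁻¹) ∧
      opNorm (PiM M (-1) ξ * PiM M 1 η) ≤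
        C * (InnerProductGeometry.angle ξ η + (jb 1 ξ)⁻¹ + (jb 1 η)⁻¹) := by
  refine ⟨|M| + 1, by positivity, fun ξ η hξ hη => ?_⟩
  have hdiff : 2⁻¹ * ‖unitDiracSymbol M ξ - unitDiracSymbol M η‖ ≤
      (|M| + 1) * (angle ξ η + (jb 1 ξ)⁻¹ + (jb 1 η)⁻¹) := by
    have hξ' := abs_div_jb_le M ξ
    have hη' := abs_div_jb_le M η
    nlinarith [norm_unitDiracSymbol_sub_le M hξ hη, angle_nonneg ξ η, abs_nonneg M]
  have hS := unitDiracSymbol_mul_self M hξ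
  have hS1 := (norm_unitDiracSymbol M hξ).le
  constructor
  · rw [PiM_one, PiM_neg_one]
    exact (norm_smul_one_add_mul_smul_one_sub_le hS hS1 _).trans hdiff
  · rw [PiM_neg_one, PiM_one]
    have := norm_smul_one_add_mul_smul_one_sub_le (d := -unitDiracSymbol M ξ)
      (by rwa [neg_mul_neg]) (by rwa [norm_neg]) (-unitDiracSymbol M η)
    rw [neg_sub_neg, norm_sub_rev, sub_neg_eq_add, ← sub_eq_add_neg] at this
    exact this.trans hdiff

theorem stmt4 (M : ℝ) (hM : 0 ≤ M) :
    ∃ C : ℝ, 0 < C ∧ ∀ (ξ η : E2), ξ ≠ 0 → η ≠ 0 →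
      opNorm (PiM M 1 ξ * PiM M (-1) η) ≤
        C * (InnerProductGeometry.angle ξ η + (jb 1 ξ)⁻¹ + (jb 1 η)⁻¹) ∧
      opNorm (PiM M (-1) ξ * PiM M 1 η) ≤
        C * (InnerProductGeometry.angle ξ η + (jb 1 ξ)⁻¹ + (jb 1 η)⁻¹) :=
  stmt4_general M
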